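/- arXiv:2205.01469 — 6 statements merged into one kernel-verified Lean document; each statement's English description precedes it below -/
import Mathlib

section
/- Every m×n bimatrix game G can be written in exactly one way as G = I + Z + B, where I is a normalized identical interest game, Z is a normalized zero-sum game, and B is a zero-sum equivalent potential game; that is, the space of m×n bimatrix games is the direct sum (𝓘∩𝓝) ⊕ (𝓩∩𝓝) ⊕ 𝓑 where 𝓑 = (𝓘+𝓔) ∩ (𝓩+𝓔). -/
open Matrix Filter

abbrev Game (m n : ℕ) := Matrix (Fin m) (Fin n) ℝ × Matrix (Fin m) (Fin n) ℝ

/-- A non-strategic game: player 1's payoff depends only on player 2's action and vice versa. -/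
def NonStrategic {m n : ℕ} (G : Game m n) : Prop :=
  ∃ (x : Fin n → ℝ) (y : Fin m → ℝ), (∀ i j, G.1 i j = x j) ∧ (∀ i j, G.2 i j = y i)

/-- Identical interest games: A = B. -/
def IdInterest {m n : ℕ} (G : Game m n) : Prop := G.1 = G.2

/-- Zero-sum games: A + B = 0. -/
def ZeroSum {m n : ℕ} (G : Game m n) : Prop := G.1 + G.2 = 0

/-- Normalized games: columns of A and rows of B sum to zero. -/
def Normalized {m n : ℕ} (G : Game m n) : Prop :=
  (∀ j, ∑ i, G.1 i j = 0) ∧ (∀ i, ∑ j, G.2 i j = 0)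

/-- Potential games: sums of an identical-interest game and a non-strategic game (𝓘+𝓔). -/
def IsPotentialGame {m n : ℕ} (G : Game m n) : Prop :=
  ∃ I E : Game m n, IdInterest I ∧ NonStrategic E ∧ G = I + E

/-- Games additionally equivalent to a zero-sum game (𝓩+𝓔). -/
def IsZeroSumEquivAdd {m n : ℕ} (G : Game m n) : Prop :=
  ∃ Z E : Game m n, ZeroSum Z ∧ NonStrategic E ∧ G = Z + E

/-- Zero-sum equivalent potential games, 𝓑 = (𝓘+𝓔) ∩ (𝓩+𝓔). -/
def IsZSEP {m n : ℕ} (G : Game m n) : Prop := IsPotentialGame G ∧ IsZeroSumEquivAdd G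

/-- Normalized harmonic games: normalized with mA + nB = 0. -/
def NormHarmonic (m n : ℕ) (G : Game m n) : Prop :=
  Normalized G ∧ (m : ℝ) • G.1 + (n : ℝ) • G.2 = 0

/-- Normalized potential games, 𝓟 = 𝓝 ∩ (𝓘+𝓔). -/
def NormPotential {m n : ℕ} (G : Game m n) : Prop :=
  Normalized G ∧ IsPotentialGame G

/-- Strategic equivalence: G' = (αA, βB) + E with α, β > 0 and E non-strategic. -/
def StratEquiv {m n : ℕ} (G G' : Game m n) : Prop :=
  ∃ α β : ℝ, 0 < α ∧ 0 < β ∧ ∃ E : Game m n,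
    NonStrategic E ∧ G'.1 = α • G.1 + E.1 ∧ G'.2 = β • G.2 + E.2

/-- G ∈ 𝓢(𝓩): G is strategically equivalent to some zero-sum game. -/
def StratEquivZeroSum {m n : ℕ} (G : Game m n) : Prop :=
  ∃ Z : Game m n, ZeroSum Z ∧ StratEquiv G Z

/-- G ∈ 𝓢(𝓘): G is strategically equivalent to some identical interest game. -/
def StratEquivIdInterest {m n : ℕ} (G : Game m n) : Prop :=
  ∃ I : Game m n, IdInterest I ∧ StratEquiv G I

/-- Nash equilibrium of a bimatrix game. -/
def IsNash {m n : ℕ} (G : Game m n) (p : Fin m → ℝ) (q : Fin n → ℝ) : Prop :=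
  p ∈ stdSimplex ℝ (Fin m) ∧ q ∈ stdSimplex ℝ (Fin n) ∧
  (∀ p' ∈ stdSimplex ℝ (Fin m), p' ⬝ᵥ G.1.mulVec q ≤ p ⬝ᵥ G.1.mulVec q) ∧
  (∀ q' ∈ stdSimplex ℝ (Fin n), p ⬝ᵥ G.2.mulVec q' ≤ p ⬝ᵥ G.2.mulVec q)

/-- Discrete-time fictitious play sequence of a bimatrix game. -/
def IsDFP {m n : ℕ} (G : Game m n) (p : ℕ → Fin m → ℝ) (q : ℕ → Fin n → ℝ) : Prop :=
  (∀ t, p t ∈ stdSimplex ℝ (Fin m) ∧ q t ∈ stdSimplex ℝ (Fin n)) ∧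
  ∀ t : ℕ, ∃ (i : Fin m) (j : Fin n),
    (∀ i', (G.1.mulVec (q t)) i' ≤ (G.1.mulVec (q t)) i) ∧
    (∀ j', (G.2.vecMul (p t)) j' ≤ (G.2.vecMul (p t)) j) ∧
    p (t + 1) = ((t : ℝ) / (t + 1)) • p t + ((1 : ℝ) / (t + 1)) • (Pi.single i 1 : Fin m → ℝ) ∧
    q (t + 1) = ((t : ℝ) / (t + 1)) • q t + ((1 : ℝ) / (t + 1)) • (Pi.single j 1 : Fin n → ℝ)

/-- The fictitious play property: every DFP sequence converges to the set of Nash equilibria. -/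
def HasFPP {m n : ℕ} (G : Game m n) : Prop :=
  ∀ p q, IsDFP G p q →
    Tendsto (fun t => Metric.infDist (p t, q t)
      {pq : (Fin m → ℝ) × (Fin n → ℝ) | IsNash G pq.1 pq.2}) atTop (nhds 0)

/-- The class 𝓓: at least one payoff matrix has the form M i j = x i + y j. -/
def InD {m n : ℕ} (G : Game m n) : Prop :=
  (∃ (x : Fin m → ℝ) (y : Fin n → ℝ), ∀ i j, G.1 i j = x i + y j) ∨
  (∃ (x : Fin m → ℝ) (y : Fin n → ℝ), ∀ i j, G.2 i j = x i + y j)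

/-!
Double centering, `M ↦ M - (column means) - (row means) + (grand mean)`, is the projection of
the space of matrices onto the doubly centered matrices (all row and column sums zero) along the
additively separable ones (`M i j = x i + y j`). A game `(A, B)` is a potential game iff `A - B`
is separable, and zero-sum equivalent iff `A + B` is, so `𝓑` consists of the games with `A` and
`B` both separable. Hence the `𝓑`-component of `G = (A, B)` must be `(A - cA, B - cB)`, where
`c` is double centering, and the normalized remainder `(cA, cB)` splits uniquely as
`(C, C) + (D, -D)` with `C = (cA + cB) / 2` and `D = (cA - cB) / 2`.
-/

open Finset

namespace Matrix

variable (ι κ 𝕜 : Type*) [Field 𝕜]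

def sumSeparable : Submodule 𝕜 (Matrix ι κ 𝕜) where
  carrier := {M | ∃ (x : ι → 𝕜) (y : κ → 𝕜), ∀ i j, M i j = x i + y j}
  add_mem' := by
    rintro M N ⟨x, y, hM⟩ ⟨x', y', hN⟩
    exact ⟨x + x', y + y', fun i j => by simp only [add_apply, hM, hN, Pi.add_apply]; ring⟩
  zero_mem' := ⟨0, 0, by simp⟩
  smul_mem' := by
    rintro c M ⟨x, y, hM⟩
    exact ⟨c • x, c • y, fun i j => by simp [hM, mul_add]⟩

variable {ι κ 𝕜} in
@[simp]
theorem mem_sumSeparable {M : Matrix ι κ 𝕜} :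
    M ∈ sumSeparable ι κ 𝕜 ↔ ∃ (x : ι → 𝕜) (y : κ → 𝕜), ∀ i j, M i j = x i + y j :=
  Iff.rfl

variable [Fintype ι] [Fintype κ]

def doublyCentered : Submodule 𝕜 (Matrix ι κ 𝕜) where
  carrier := {M | (∀ j, ∑ i, M i j = 0) ∧ ∀ i, ∑ j, M i j = 0}
  add_mem' := by
    rintro M N ⟨hMc, hMr⟩ ⟨hNc, hNr⟩
    exact ⟨fun j => by simp [sum_add_distrib, hMc, hNc],
      fun i => by simp [sum_add_distrib, hMr, hNr]⟩
  zero_mem' := by simp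
  smul_mem' := by
    rintro c M ⟨hMc, hMr⟩
    exact ⟨fun j => by simp [← mul_sum, hMc], fun i => by simp [← mul_sum, hMr]⟩

variable {ι κ 𝕜}

@[simp]
theorem mem_doublyCentered {M : Matrix ι κ 𝕜} :
    M ∈ doublyCentered ι κ 𝕜 ↔ (∀ j, ∑ i, M i j = 0) ∧ ∀ i, ∑ j, M i j = 0 :=
  Iff.rfl

def doubleCenter : Matrix ι κ 𝕜 →ₗ[𝕜] Matrix ι κ 𝕜 where
  toFun M := of fun i j => M i j - (∑ k, M k j) / Fintype.card ι - (∑ l, M i l) / Fintype.card κ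
    + (∑ k, ∑ l, M k l) / (Fintype.card ι * Fintype.card κ)
  map_add' M N := by ext i j; simp only [add_apply, sum_add_distrib, of_apply]; ring
  map_smul' c M := by
    ext i j
    simp only [smul_apply, smul_eq_mul, ← mul_sum, of_apply, RingHom.id_apply]
    ring

theorem doubleCenter_apply (M : Matrix ι κ 𝕜) (i : ι) (j : κ) :
    doubleCenter M i j = M i j - (∑ k, M k j) / Fintype.card ι - (∑ l, M i l) / Fintype.card κ
      + (∑ k, ∑ l, M k l) / (Fintype.card ι * Fintype.card κ) :=
  rfl

theorem doubleCenter_eq_self {M : Matrix ι κ 𝕜} (hM : M ∈ doublyCentered ι κ 𝕜) :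
    doubleCenter M = M := by
  obtain ⟨hcol, hrow⟩ := hM
  ext i j
  simp [doubleCenter_apply, hcol, hrow]

theorem sub_doubleCenter_mem_sumSeparable (M : Matrix ι κ 𝕜) :
    M - doubleCenter M ∈ sumSeparable ι κ 𝕜 := by
  refine ⟨fun i => (∑ l, M i l) / Fintype.card κ
      - (∑ k, ∑ l, M k l) / (Fintype.card ι * Fintype.card κ),
    fun j => (∑ k, M k j) / Fintype.card ι, fun i j => ?_⟩
  rw [sub_apply, doubleCenter_apply]
  ring

variable [CharZero 𝕜]

theorem doubleCenter_mem_doublyCentered (M : Matrix ι κ 𝕜) :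
    doubleCenter M ∈ doublyCentered ι κ 𝕜 := by
  refine ⟨fun j => ?_, fun i => ?_⟩
  · cases isEmpty_or_nonempty ι
    · simp
    have : Nonempty κ := ⟨j⟩
    have hι : (Fintype.card ι : 𝕜) ≠ 0 := Nat.cast_ne_zero.2 Fintype.card_ne_zero
    have hκ : (Fintype.card κ : 𝕜) ≠ 0 := Nat.cast_ne_zero.2 Fintype.card_ne_zero
    simp only [doubleCenter_apply, sum_add_distrib, sum_sub_distrib, sum_const, card_univ,
      nsmul_eq_mul, ← sum_div]
    field_simp
    ring
  · cases isEmpty_or_nonempty κ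
    · simp
    have : Nonempty ι := ⟨i⟩
    have hι : (Fintype.card ι : 𝕜) ≠ 0 := Nat.cast_ne_zero.2 Fintype.card_ne_zero
    have hκ : (Fintype.card κ : 𝕜) ≠ 0 := Nat.cast_ne_zero.2 Fintype.card_ne_zero
    simp only [doubleCenter_apply, sum_add_distrib, sum_sub_distrib, sum_const, card_univ,
      nsmul_eq_mul, ← sum_div]
    field_simp
    rw [sum_comm]
    ring

theorem doubleCenter_eq_zero {M : Matrix ι κ 𝕜} (hM : M ∈ sumSeparable ι κ 𝕜) :
    doubleCenter M = 0 := by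
  obtain ⟨x, y, hxy⟩ := hM
  ext i j
  have : Nonempty ι := ⟨i⟩
  have : Nonempty κ := ⟨j⟩
  have hι : (Fintype.card ι : 𝕜) ≠ 0 := Nat.cast_ne_zero.2 Fintype.card_ne_zero
  have hκ : (Fintype.card κ : 𝕜) ≠ 0 := Nat.cast_ne_zero.2 Fintype.card_ne_zero
  simp only [doubleCenter_apply, hxy, sum_add_distrib, sum_const, card_univ, nsmul_eq_mul,
    ← mul_sum, zero_apply]
  field_simp
  ring

theorem doubleCenter_add_eq {P S : Matrix ι κ 𝕜} (hP : P ∈ doublyCentered ι κ 𝕜)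
    (hS : S ∈ sumSeparable ι κ 𝕜) : doubleCenter (P + S) = P := by
  rw [map_add, doubleCenter_eq_self hP, doubleCenter_eq_zero hS, add_zero]

end Matrix

section Games

variable {m n : ℕ}

theorem isPotentialGame_iff {G : Game m n} :
    IsPotentialGame G ↔ G.1 - G.2 ∈ sumSeparable (Fin m) (Fin n) ℝ := by
  constructor
  · rintro ⟨I, E, (hI : I.1 = I.2), ⟨x, y, hx, hy⟩, rfl⟩
    refine ⟨-y, x, fun i j => ?_⟩
    simp only [Prod.fst_add, Prod.snd_add, Matrix.sub_apply, Matrix.add_apply, hI, hx, hy,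
      Pi.neg_apply]
    ring
  · rintro ⟨x, y, hxy⟩
    let E : Game m n := (of fun _ j => y j, of fun i _ => -x i)
    refine ⟨G - E, E, ?_, ⟨y, -x, fun _ _ => rfl, fun _ _ => rfl⟩, (sub_add_cancel G E).symm⟩
    ext i j
    have := hxy i j
    simp only [Prod.fst_sub, Prod.snd_sub, Matrix.sub_apply, of_apply, E] at this ⊢
    linarith

theorem isZeroSumEquivAdd_iff {G : Game m n} :
    IsZeroSumEquivAdd G ↔ G.1 + G.2 ∈ sumSeparable (Fin m) (Fin n) ℝ := by
  constructor
  · rintro ⟨Z, E, hZ, ⟨x, y, hx, hy⟩, rfl⟩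
    refine ⟨y, x, fun i j => ?_⟩
    have := congrFun (congrFun hZ i) j
    simp only [Prod.fst_add, Prod.snd_add, Matrix.add_apply, Matrix.zero_apply, hx, hy] at this ⊢
    linarith
  · rintro ⟨x, y, hxy⟩
    let E : Game m n := (of fun _ j => y j, of fun i _ => x i)
    refine ⟨G - E, E, ?_, ⟨y, x, fun _ _ => rfl, fun _ _ => rfl⟩, (sub_add_cancel G E).symm⟩
    ext i j
    have := hxy i j
    simp only [Prod.fst_sub, Prod.snd_sub, Matrix.add_apply, Matrix.sub_apply, Matrix.zero_apply,
      of_apply, E] at this ⊢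
    linarith

theorem isZSEP_iff {G : Game m n} :
    IsZSEP G ↔ G.1 ∈ sumSeparable (Fin m) (Fin n) ℝ ∧ G.2 ∈ sumSeparable (Fin m) (Fin n) ℝ := by
  rw [IsZSEP, isPotentialGame_iff, isZeroSumEquivAdd_iff]
  refine ⟨fun ⟨hsub, hadd⟩ => ⟨?_, ?_⟩, fun ⟨h₁, h₂⟩ => ⟨sub_mem h₁ h₂, add_mem h₁ h₂⟩⟩
  · rw [show G.1 = (2 : ℝ)⁻¹ • ((G.1 + G.2) + (G.1 - G.2)) by module]
    exact Submodule.smul_mem _ _ (add_mem hadd hsub)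
  · rw [show G.2 = (2 : ℝ)⁻¹ • ((G.1 + G.2) - (G.1 - G.2)) by module]
    exact Submodule.smul_mem _ _ (sub_mem hadd hsub)

theorem normalized_mk_self_iff (C : Matrix (Fin m) (Fin n) ℝ) :
    Normalized ((C, C) : Game m n) ↔ C ∈ doublyCentered (Fin m) (Fin n) ℝ :=
  Iff.rfl

theorem normalized_mk_neg_iff (D : Matrix (Fin m) (Fin n) ℝ) :
    Normalized ((D, -D) : Game m n) ↔ D ∈ doublyCentered (Fin m) (Fin n) ℝ := by
  simp [Normalized]

end Games

theorem stmt2_general {m n : ℕ} (G : Game m n) :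
    ∃! d : Game m n × Game m n × Game m n,
      IdInterest d.1 ∧ Normalized d.1 ∧
      ZeroSum d.2.1 ∧ Normalized d.2.1 ∧
      IsZSEP d.2.2 ∧
      G = d.1 + d.2.1 + d.2.2 := by
  set P := doubleCenter G.1 with hP_def
  set Q := doubleCenter G.2 with hQ_def
  have hP : P ∈ doublyCentered _ _ ℝ := doubleCenter_mem_doublyCentered G.1
  have hQ : Q ∈ doublyCentered _ _ ℝ := doubleCenter_mem_doublyCentered G.2
  refine ⟨((2⁻¹ • (P + Q), 2⁻¹ • (P + Q)), (2⁻¹ • (P - Q), -(2⁻¹ • (P - Q))), (G.1 - P, G.2 - Q)),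
    ⟨rfl, (normalized_mk_self_iff _).2 (Submodule.smul_mem _ _ (add_mem hP hQ)), add_neg_cancel _,
      (normalized_mk_neg_iff _).2 (Submodule.smul_mem _ _ (sub_mem hP hQ)),
      isZSEP_iff.2 ⟨sub_doubleCenter_mem_sumSeparable _, sub_doubleCenter_mem_sumSeparable _⟩,
      Prod.ext (by simp only [Prod.fst_add]; module) (by simp only [Prod.snd_add]; module)⟩, ?_⟩
  rintro ⟨⟨C, C'⟩, ⟨D, D'⟩, B₁, B₂⟩ ⟨rfl : C = C', hC, hD, hDn, hB, hG⟩
  obtain rfl : D' = -D := eq_neg_of_add_eq_zero_right hD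
  rw [normalized_mk_self_iff] at hC
  rw [normalized_mk_neg_iff] at hDn
  obtain ⟨hB₁, hB₂⟩ := isZSEP_iff.1 hB
  have hG₁ : G.1 = C + D + B₁ := congrArg Prod.fst hG
  have hG₂ : G.2 = C + -D + B₂ := congrArg Prod.snd hG
  have hPCD : P = C + D := by
    rw [hP_def, hG₁]; exact doubleCenter_add_eq (add_mem hC hDn) hB₁
  have hQCD : Q = C + -D := by
    rw [hQ_def, hG₂]; exact doubleCenter_add_eq (add_mem hC (neg_mem hDn)) hB₂
  rw [hPCD, hQCD, hG₁, hG₂]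
  simp only [Prod.mk.injEq]
  refine ⟨⟨?_, ?_⟩, ⟨?_, ?_⟩, ?_, ?_⟩ <;> module

theorem stmt2 {m n : ℕ} (hm : 1 ≤ m) (hn : 1 ≤ n) (G : Game m n) :
    ∃! d : Game m n × Game m n × Game m n,
      IdInterest d.1 ∧ Normalized d.1 ∧
      ZeroSum d.2.1 ∧ Normalized d.2.1 ∧
      IsZSEP d.2.2 ∧
      G = d.1 + d.2.1 + d.2.2 :=
  stmt2_general G
end

section
/- Let G be an m×n bimatrix game that is strategically equivalent to a zero-sum game or strategically equivalent to an identical interest game, and let B be a zero-sum equivalent potential game (B ∈ (𝓘+𝓔)∩(𝓩+𝓔)). Then G + B is strategically equivalent to a zero-sum game or strategically equivalent to an identical interest game. -/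
open Matrix Filter

/-! A game in 𝓑 differs by a non-strategic game from one in which each player's payoff depends only
on their own action, say (fᵢ, gⱼ). Such a game is turned into the zero-sum game (fᵢ - gⱼ, gⱼ - fᵢ)
and into the identical interest game (fᵢ + gⱼ, fᵢ + gⱼ) by adding the non-strategic games
(-gⱼ, -fᵢ) and (gⱼ, fᵢ). Scaling by the positive factors of a strategic equivalence keeps this
form, so adding a game of 𝓑 never leaves 𝓢(𝓩) or 𝓢(𝓘). -/

section

variable {m n : ℕ}

def SelfDependent (H : Game m n) : Prop :=
  ∃ (f : Fin m → ℝ) (g : Fin n → ℝ), (∀ i j, H.1 i j = f i) ∧ (∀ i j, H.2 i j = g j)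

theorem NonStrategic.add {E E' : Game m n} (hE : NonStrategic E) (hE' : NonStrategic E') :
    NonStrategic (E + E') := by
  obtain ⟨x, y, hx, hy⟩ := hE
  obtain ⟨x', y', hx', hy'⟩ := hE'
  exact ⟨x + x', y + y', fun i j => by simp [hx, hx'], fun i j => by simp [hy, hy']⟩

theorem NonStrategic.smul_smul {E : Game m n} (hE : NonStrategic E) (a b : ℝ) :
    NonStrategic (a • E.1, b • E.2) := by
  obtain ⟨x, y, hx, hy⟩ := hE
  exact ⟨a • x, b • y, fun i j => by simp [hx], fun i j => by simp [hy]⟩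

theorem SelfDependent.smul_smul {H : Game m n} (hH : SelfDependent H) (a b : ℝ) :
    SelfDependent (a • H.1, b • H.2) := by
  obtain ⟨f, g, hf, hg⟩ := hH
  exact ⟨a • f, b • g, fun i j => by simp [hf], fun i j => by simp [hg]⟩

theorem ZeroSum.add {Z Z' : Game m n} (hZ : ZeroSum Z) (hZ' : ZeroSum Z') : ZeroSum (Z + Z') := by
  unfold ZeroSum at *
  simp only [Prod.fst_add, Prod.snd_add]
  rw [add_add_add_comm, hZ, hZ', add_zero]

theorem IdInterest.add {I I' : Game m n} (hI : IdInterest I) (hI' : IdInterest I') :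
    IdInterest (I + I') := by
  unfold IdInterest at *
  simp only [Prod.fst_add, Prod.snd_add, hI, hI']

theorem SelfDependent.exists_nonStrategic_zeroSum {H : Game m n} (hH : SelfDependent H) :
    ∃ N, NonStrategic N ∧ ZeroSum (H + N) := by
  obtain ⟨f, g, hf, hg⟩ := hH
  refine ⟨(of fun _ j => -g j, of fun i _ => -f i), ⟨-g, -f, fun _ _ => rfl, fun _ _ => rfl⟩, ?_⟩
  ext i j
  simp [hf, hg]

theorem SelfDependent.exists_nonStrategic_idInterest {H : Game m n} (hH : SelfDependent H) :
    ∃ N, NonStrategic N ∧ IdInterest (H + N) := by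
  obtain ⟨f, g, hf, hg⟩ := hH
  refine ⟨(of fun _ j => g j, of fun i _ => f i), ⟨g, f, fun _ _ => rfl, fun _ _ => rfl⟩, ?_⟩
  ext i j
  simp [hf, hg, add_comm]

theorem IsZSEP.exists_selfDependent_add_nonStrategic {B : Game m n} (hB : IsZSEP B) :
    ∃ S E, SelfDependent S ∧ NonStrategic E ∧ B = S + E := by
  obtain ⟨⟨⟨A, A'⟩, E, hI, ⟨x, y, hx, hy⟩, rfl⟩, ⟨Z, E', hZ, ⟨x', y', hx', hy'⟩, hB⟩⟩ := hB
  obtain rfl : A = A' := hI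
  -- B.1 - B.2 = xⱼ - yᵢ and B.1 + B.2 = x'ⱼ + y'ᵢ determine both payoff matrices.
  have hA : ∀ i j, A i j = (x' j + y' i - x j - y i) / 2 := fun i j => by
    have hZij : Z.1 i j + Z.2 i j = 0 := by simpa using congrFun (congrFun hZ i) j
    have hBij := congrArg (fun G : Game m n => G.1 i j + G.2 i j) hB
    simp only [Prod.fst_add, Prod.snd_add, Matrix.add_apply, hx, hy, hx', hy'] at hBij
    linarith
  refine ⟨(of fun i _ => (y' i - y i) / 2, of fun _ j => (x' j - x j) / 2),
    (of fun _ j => (x' j + x j) / 2, of fun i _ => (y' i + y i) / 2),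
    ⟨_, _, fun _ _ => rfl, fun _ _ => rfl⟩, ⟨_, _, fun _ _ => rfl, fun _ _ => rfl⟩, ?_⟩
  ext i j
  · simp only [Prod.fst_add, Matrix.add_apply, of_apply, hx, hA]; ring
  · simp only [Prod.snd_add, Matrix.add_apply, of_apply, hy, hA]; ring

theorem exists_stratEquiv_add_of_isZSEP (P : Game m n → Prop)
    (hadd : ∀ X Y, P X → P Y → P (X + Y))
    (hself : ∀ H, SelfDependent H → ∃ N, NonStrategic N ∧ P (H + N))
    {G B : Game m n} (hG : ∃ Z, P Z ∧ StratEquiv G Z) (hB : IsZSEP B) :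
    ∃ Z, P Z ∧ StratEquiv (G + B) Z := by
  obtain ⟨S, E', hS, hE', rfl⟩ := hB.exists_selfDependent_add_nonStrategic
  obtain ⟨Z, hZ, α, β, hα, hβ, E, hE, h1, h2⟩ := hG
  obtain ⟨N, hN, hPN⟩ := hself _ (hS.smul_smul α β)
  refine ⟨Z + ((α • S.1, β • S.2) + N), hadd _ _ hZ hPN, α, β, hα, hβ,
    E + N + (-α • E'.1, -β • E'.2), (hE.add hN).add (hE'.smul_smul _ _), ?_, ?_⟩
  · simp only [Prod.fst_add, h1]; module
  · simp only [Prod.snd_add, h2]; module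

end

theorem stmt6_general {m n : ℕ} (G B : Game m n)
    (hG : StratEquivZeroSum G ∨ StratEquivIdInterest G) (hB : IsZSEP B) :
    StratEquivZeroSum (G + B) ∨ StratEquivIdInterest (G + B) := by
  rcases hG with hZ | hI
  · exact Or.inl <| exists_stratEquiv_add_of_isZSEP ZeroSum (fun _ _ => ZeroSum.add)
      (fun _ => SelfDependent.exists_nonStrategic_zeroSum) hZ hB
  · exact Or.inr <| exists_stratEquiv_add_of_isZSEP IdInterest (fun _ _ => IdInterest.add)
      (fun _ => SelfDependent.exists_nonStrategic_idInterest) hI hB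

theorem stmt6 {m n : ℕ} (hm : 1 ≤ m) (hn : 1 ≤ n) (G B : Game m n)
    (hG : StratEquivZeroSum G ∨ StratEquivIdInterest G) (hB : IsZSEP B) :
    StratEquivZeroSum (G + B) ∨ StratEquivIdInterest (G + B) :=
  stmt6_general G B hG hB
end

section
/- Let G be an m×n bimatrix game that is strategically equivalent to a zero-sum game or strategically equivalent to an identical interest game, and let G = P + H + E be its Hodge decomposition, where P is a normalized potential game, H is a normalized harmonic game, and E is a non-strategic game. Then for every λ ∈ ℝ, the game λP + (1−λ)H is strategically equivalent to a zero-sum game, or strategically equivalent to an identical interest game, or at least one of its two payoff matrices M satisfies M_{ij} = x_i + y_j for some x ∈ ℝ^m, y ∈ ℝ^n. -/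
open Matrix Filter

/-
Work modulo the subspace `S` of matrices of the form `M i j = x i + y j`. A game `K` lies in
`𝓢(𝓩) ∪ 𝓢(𝓘) ∪ 𝓓` as soon as both payoff matrices are congruent modulo `S` to multiples
`s • C`, `t • C` of one matrix `C`: if `s` or `t` vanishes we are in `𝓓`, otherwise
`K.2 ≡ (t / s) • K.1` and the sign of `t / s` decides between identical interest and zero-sum.
The hypothesis on `G` gives `G.2 ≡ c • G.1`. Modulo `S` the non-strategic part vanishes and
`P.1 ≡ P.2`, so `H.1 - H.2 ≡ (1 - c) • G.1`; together with `m • H.1 + n • H.2 = 0` this makes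
`H.1`, `H.2`, hence also `P.1`, `P.2` and every `λ • P + (1 - λ) • H`, congruent to multiples
of `G.1`.
-/

def separableMatrices (m n : ℕ) : Submodule ℝ (Matrix (Fin m) (Fin n) ℝ) where
  carrier := {M | ∃ (x : Fin m → ℝ) (y : Fin n → ℝ), ∀ i j, M i j = x i + y j}
  zero_mem' := ⟨0, 0, fun _ _ => by simp⟩
  add_mem' := by
    rintro M N ⟨x, y, hM⟩ ⟨x', y', hN⟩
    refine ⟨x + x', y + y', fun i j => ?_⟩
    rw [Matrix.add_apply, hM, hN, Pi.add_apply, Pi.add_apply]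
    ring
  smul_mem' := by
    rintro r M ⟨x, y, hM⟩
    refine ⟨r • x, r • y, fun i j => ?_⟩
    simp only [Matrix.smul_apply, hM, Pi.smul_apply, smul_eq_mul]
    ring

section Games

variable {m n : ℕ}

theorem inD_iff (K : Game m n) :
    InD K ↔ K.1 ∈ separableMatrices m n ∨ K.2 ∈ separableMatrices m n :=
  Iff.rfl

theorem NonStrategic.fst_mem {E : Game m n} (hE : NonStrategic E) :
    E.1 ∈ separableMatrices m n := by
  obtain ⟨x, -, hx, -⟩ := hE
  exact ⟨0, x, fun i j => by simp [hx]⟩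

theorem NonStrategic.snd_mem {E : Game m n} (hE : NonStrategic E) :
    E.2 ∈ separableMatrices m n := by
  obtain ⟨-, y, -, hy⟩ := hE
  exact ⟨y, 0, fun i j => by simp [hy]⟩

theorem IsPotentialGame.fst_sub_snd_mem {P : Game m n} (hP : IsPotentialGame P) :
    P.1 - P.2 ∈ separableMatrices m n := by
  obtain ⟨I, E, hI, hE, rfl⟩ := hP
  have hIE : (I + E).1 - (I + E).2 = E.1 - E.2 := by
    rw [Prod.fst_add, Prod.snd_add, show I.1 = I.2 from hI]
    abel
  rw [hIE]
  exact sub_mem hE.fst_mem hE.snd_mem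

theorem StratEquiv.exists_snd_sub_smul_fst_mem {G G' : Game m n} (h : StratEquiv G G') {ε : ℝ}
    (hε : G'.2 = ε • G'.1) : ∃ c : ℝ, G.2 - c • G.1 ∈ separableMatrices m n := by
  obtain ⟨α, β, -, hβ, E, hE, h₁, h₂⟩ := h
  refine ⟨β⁻¹ * ε * α, ?_⟩
  have hG₂ : G.2 - (β⁻¹ * ε * α) • G.1 = β⁻¹ • (ε • E.1 - E.2) := by
    have hβ' : β • G.2 = ε • (α • G.1 + E.1) - E.2 := by
      rw [← h₁, ← hε, h₂]
      abel
    rw [← eq_inv_smul_iff₀ hβ.ne'] at hβ'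
    rw [hβ']
    module
  rw [hG₂]
  exact Submodule.smul_mem _ _ (sub_mem (Submodule.smul_mem _ _ hE.fst_mem) hE.snd_mem)

theorem exists_snd_sub_smul_fst_mem {G : Game m n}
    (hG : StratEquivZeroSum G ∨ StratEquivIdInterest G) :
    ∃ c : ℝ, G.2 - c • G.1 ∈ separableMatrices m n := by
  rcases hG with ⟨Z, hZ, hGZ⟩ | ⟨I, hI, hGI⟩
  · exact hGZ.exists_snd_sub_smul_fst_mem (ε := -1)
      (by rw [neg_one_smul, ← add_eq_zero_iff_neg_eq.mp hZ])
  · exact hGI.exists_snd_sub_smul_fst_mem (ε := 1) (by rw [one_smul, hI])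

theorem exists_stratEquiv_snd_eq_smul_fst {K : Game m n} {r ε : ℝ}
    (hK : K.2 - r • K.1 ∈ separableMatrices m n) (hεr : 0 < ε / r) :
    ∃ Z : Game m n, StratEquiv K Z ∧ Z.2 = ε • Z.1 := by
  obtain ⟨x, y, hxy⟩ := hK
  have hr : r ≠ 0 := by rintro rfl; simp at hεr
  let E : Game m n := (of fun _ j => r⁻¹ * y j, of fun i _ => -(ε / r * x i))
  refine ⟨(K.1 + E.1, (ε / r) • K.2 + E.2), ⟨1, ε / r, one_pos, hεr, E,
    ⟨_, _, fun _ _ => rfl, fun _ _ => rfl⟩, by rw [one_smul], rfl⟩, ?_⟩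
  ext i j
  have hK₂ : K.2 i j = r * K.1 i j + x i + y j := by
    have := hxy i j
    simp only [Matrix.sub_apply, Matrix.smul_apply, smul_eq_mul] at this
    linarith
  simp only [E, Matrix.add_apply, Matrix.smul_apply, of_apply, smul_eq_mul, hK₂]
  field_simp
  ring

theorem stratEquiv_or_inD_of_sub_smul_mem {K : Game m n} {C : Matrix (Fin m) (Fin n) ℝ}
    {s t : ℝ} (hK₁ : K.1 - s • C ∈ separableMatrices m n)
    (hK₂ : K.2 - t • C ∈ separableMatrices m n) :
    StratEquivZeroSum K ∨ StratEquivIdInterest K ∨ InD K := by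
  rcases eq_or_ne s 0 with rfl | hs
  · exact Or.inr (Or.inr ((inD_iff K).mpr (Or.inl (by simpa using hK₁))))
  rcases eq_or_ne t 0 with rfl | ht
  · exact Or.inr (Or.inr ((inD_iff K).mpr (Or.inr (by simpa using hK₂))))
  have hK : K.2 - (t / s) • K.1 ∈ separableMatrices m n := by
    have hdiff : K.2 - (t / s) • K.1 = (K.2 - t • C) - (t / s) • (K.1 - s • C) := by
      rw [smul_sub, smul_smul, div_mul_cancel₀ t hs]
      abel
    rw [hdiff]
    exact sub_mem hK₂ (Submodule.smul_mem _ _ hK₁)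
  rcases (div_ne_zero ht hs).lt_or_gt with hneg | hpos
  · obtain ⟨Z, hKZ, hZ⟩ := exists_stratEquiv_snd_eq_smul_fst hK (ε := -1)
      (div_pos_of_neg_of_neg neg_one_lt_zero hneg)
    refine Or.inl ⟨Z, ?_, hKZ⟩
    rw [ZeroSum, hZ, neg_one_smul, add_neg_cancel]
  · obtain ⟨Z, hKZ, hZ⟩ := exists_stratEquiv_snd_eq_smul_fst hK (ε := 1) (div_pos one_pos hpos)
    exact Or.inr (Or.inl ⟨Z, by rw [IdInterest, hZ, one_smul], hKZ⟩)

end Games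

theorem combination_eq_smul_of_decomposition {V : Type*} [AddCommGroup V] [Module ℝ V]
    {μ ν c lam : ℝ} (hμν : μ + ν ≠ 0) {g₁ g₂ p₁ p₂ h₁ h₂ : V} (hg₁ : g₁ = p₁ + h₁)
    (hg₂ : g₂ = p₂ + h₂) (hp : p₁ = p₂) (hh : μ • h₁ + ν • h₂ = 0) (hc : g₂ = c • g₁) :
    lam • p₁ + (1 - lam) • h₁ = (lam + (1 - 2 * lam) * (ν * (1 - c) / (μ + ν))) • g₁ ∧
    lam • p₂ + (1 - lam) • h₂ = (lam * c + (1 - 2 * lam) * (-μ * (1 - c) / (μ + ν))) • g₁ := by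
  have hh₁ : h₁ = (ν * (1 - c) / (μ + ν)) • g₁ := by
    rw [div_eq_inv_mul, mul_smul, eq_inv_smul_iff₀ hμν]
    linear_combination (norm := module) hh + ν • (hg₂ - hg₁ - hp - hc)
  have hh₂ : h₂ = (-μ * (1 - c) / (μ + ν)) • g₁ := by
    rw [div_eq_inv_mul, mul_smul, eq_inv_smul_iff₀ hμν]
    linear_combination (norm := module) hh - μ • (hg₂ - hg₁ - hp - hc)
  constructor
  · linear_combination (norm := module) (1 - 2 * lam) • hh₁ - lam • hg₁
  · linear_combination (norm := module) (1 - 2 * lam) • hh₂ - lam • hg₂ + lam • hc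

theorem stmt7_general {m n : ℕ} (hm : 1 ≤ m) (G P H E : Game m n)
    (hG : StratEquivZeroSum G ∨ StratEquivIdInterest G)
    (hP : NormPotential P) (hH : NormHarmonic m n H) (hE : NonStrategic E)
    (hdec : G = P + H + E) (lam : ℝ) :
    StratEquivZeroSum (lam • P + (1 - lam) • H) ∨
    StratEquivIdInterest (lam • P + (1 - lam) • H) ∨
    InD (lam • P + (1 - lam) • H) := by
  let π := (separableMatrices m n).mkQ
  have hπ {M N : Matrix (Fin m) (Fin n) ℝ} : π M = π N ↔ M - N ∈ separableMatrices m n :=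
    Submodule.Quotient.eq _
  obtain ⟨c, hc⟩ := exists_snd_sub_smul_fst_mem hG
  have hmn : (m : ℝ) + n ≠ 0 := by
    have : (0 : ℝ) < m := by exact_mod_cast hm
    positivity
  have hE₁ : π E.1 = 0 := (Submodule.Quotient.mk_eq_zero _).mpr hE.fst_mem
  have hE₂ : π E.2 = 0 := (Submodule.Quotient.mk_eq_zero _).mpr hE.snd_mem
  have hG₁ : π G.1 = π P.1 + π H.1 := by simp [hdec, hE₁]
  have hG₂ : π G.2 = π P.2 + π H.2 := by simp [hdec, hE₂]
  have hPπ : π P.1 = π P.2 := hπ.mpr hP.2.fst_sub_snd_mem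
  have hHπ : (m : ℝ) • π H.1 + (n : ℝ) • π H.2 = 0 := by
    rw [← map_smul, ← map_smul, ← map_add, hH.2, map_zero]
  have hGπ : π G.2 = c • π G.1 := by rw [← map_smul]; exact hπ.mpr hc
  obtain ⟨hK₁, hK₂⟩ := combination_eq_smul_of_decomposition (lam := lam) hmn hG₁ hG₂ hPπ hHπ hGπ
  simp only [← map_smul, ← map_add] at hK₁ hK₂
  exact stratEquiv_or_inD_of_sub_smul_mem (hπ.mp hK₁) (hπ.mp hK₂)

theorem stmt7 {m n : ℕ} (hm : 1 ≤ m) (hn : 1 ≤ n) (G P H E : Game m n)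
    (hG : StratEquivZeroSum G ∨ StratEquivIdInterest G)
    (hP : NormPotential P) (hH : NormHarmonic m n H) (hE : NonStrategic E)
    (hdec : G = P + H + E) (lam : ℝ) :
    StratEquivZeroSum (lam • P + (1 - lam) • H) ∨
    StratEquivIdInterest (lam • P + (1 - lam) • H) ∨
    InD (lam • P + (1 - lam) • H) :=
  stmt7_general hm G P H E hG hP hH hE hdec lam
end

section
/- Every harmonic m×n bimatrix game, i.e. every game of the form H + E where H is a normalized harmonic game and E is a non-strategic game, has the fictitious play property: every discrete-time fictitious play sequence of the game converges to its set of Nash equilibria. -/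
open Matrix Filter

/-!
Since `m • H.1 + n • H.2 = 0`, the game `H + E` is strategically equivalent to the zero-sum game
`(m • H.1, n • H.2)`. Rescaling a player's payoffs by a positive factor and adding a term that
depends only on the opponent's action changes neither best replies nor Nash equilibria, so both
games have the same fictitious play sequences and the same equilibria.

For a zero-sum game `(M, -M)` fictitious play converges by Robinson's theorem. Scaled by `t`, the
payoff vectors `M *ᵥ q t` and `p t ᵥ* (-M)` form one of Robinson's vector systems, whose gap
`max U + max W` grows sublinearly; divided by `t` this gap is the Nikaido–Isoda function of
`(p t, q t)`. That function is continuous and vanishes only at equilibria, so compactness of the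
simplices turns its convergence to `0` into convergence to the equilibrium set.
-/

theorem le_add_mul_add_of_window {g : ℕ → ℝ} {N L : ℕ} {b c : ℝ} (hL : 0 < L) (hc : 0 ≤ c)
    (hsmall : ∀ t ≤ N, t ≤ L → g t ≤ g 0 + b)
    (hstep : ∀ s, s + L ≤ N → g (s + L) ≤ g 0 + b ∨ g (s + L) ≤ g s + c * L) :
    ∀ t ≤ N, g t ≤ g 0 + c * t + b := by
  intro t
  induction t using Nat.strong_induction_on with
  | _ t ih =>
    intro ht
    have hct : 0 ≤ c * t := by positivity
    by_cases htL : t ≤ L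
    · linarith [hsmall t ht htL]
    obtain ⟨s, rfl⟩ : ∃ s, t = s + L := ⟨t - L, by omega⟩
    push_cast at hct ⊢
    rcases hstep s ht with hg | hg
    · linarith
    · linarith [ih s (by omega) (by omega)]

namespace Robinson

variable {ι κ : Type*}

structure IsBestReplySeq (B : Matrix ι κ ℝ) (S : Finset ι) (U : ℕ → ι → ℝ) (I : ℕ → ι)
    (J : ℕ → κ) (N : ℕ) : Prop where
  mem : ∀ t < N, I t ∈ S
  le_apply : ∀ t < N, ∀ i ∈ S, U t i ≤ U t (I t)
  succ : ∀ t < N, ∀ i, U (t + 1) i = U t i + B i (J t)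

namespace IsBestReplySeq

variable {B : Matrix ι κ ℝ} {S S' : Finset ι} {U : ℕ → ι → ℝ} {I : ℕ → ι} {J : ℕ → κ}
  {N : ℕ} {a : ℝ}

theorem sub_eq_sum (h : IsBestReplySeq B S U I J N) {t : ℕ} (ht : t ≤ N) (i : ι) :
    U t i - U 0 i = ∑ τ ∈ Finset.range t, B i (J τ) := by
  induction t with
  | zero => simp
  | succ t ih =>
    rw [h.succ t ht, Finset.sum_range_succ, ← ih (by omega)]
    ring

theorem abs_sub_le (h : IsBestReplySeq B S U I J N) (ha : ∀ i j, |B i j| ≤ a) {s t : ℕ}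
    (hst : s ≤ t) (ht : t ≤ N) (i : ι) : |U t i - U s i| ≤ a * (t - s) := by
  induction t, hst using Nat.le_induction with
  | base => simp
  | succ t hst ih =>
    rw [h.succ t ht, add_sub_right_comm]
    calc |U t i - U s i + B i (J t)| ≤ |U t i - U s i| + |B i (J t)| := abs_add_le _ _
      _ ≤ a * (t - s) + a := add_le_add (ih (by omega)) (ha _ _)
      _ = a * ((t + 1 : ℕ) - s) := by push_cast; ring

theorem sup'_le_sup'_add (h : IsBestReplySeq B S U I J N) (ha : ∀ i j, |B i j| ≤ a)
    (hS : S.Nonempty) {s t : ℕ} (hst : s ≤ t) (ht : t ≤ N) :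
    S.sup' hS (U t) ≤ S.sup' hS (U s) + a * (t - s) :=
  Finset.sup'_le _ _ fun i hi => by
    linarith [(abs_le.1 (h.abs_sub_le ha hst ht i)).2, Finset.le_sup' (U s) hi]

theorem sup'_le_apply_add (h : IsBestReplySeq B S U I J N) (ha : ∀ i j, |B i j| ≤ a)
    (hS : S.Nonempty) {τ t : ℕ} (hτ : τ < t) (ht : t ≤ N) :
    S.sup' hS (U t) ≤ U t (I τ) + 2 * a * (t - τ) := by
  have hchosen : S.sup' hS (U τ) ≤ U τ (I τ) :=
    Finset.sup'_le _ _ (h.le_apply τ (by omega))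
  linarith [h.sup'_le_sup'_add ha hS hτ.le ht,
    (abs_le.1 (h.abs_sub_le ha hτ.le ht (I τ))).1]

theorem mul_sub_le_sum (h : IsBestReplySeq B S U I J N) (ha : ∀ i j, |B i j| ≤ a)
    (ha0 : 0 ≤ a) (hS : S.Nonempty) {s t : ℕ} (ht : t ≤ N)
    (hall : ∀ i ∈ S, ∃ τ, s ≤ τ ∧ τ < t ∧ I τ = i) :
    t * (S.sup' hS (U t) - S.sup' hS (U 0) - 2 * a * (t - s)) ≤
      ∑ τ ∈ Finset.range t, (U t (I τ) - U 0 (I τ)) := by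
  have hterm : ∀ τ ∈ Finset.range t,
      S.sup' hS (U t) - S.sup' hS (U 0) - 2 * a * (t - s) ≤ U t (I τ) - U 0 (I τ) := by
    intro τ hτ
    have hIτ : I τ ∈ S := h.mem τ (by grind)
    obtain ⟨σ, hsσ, hσt, hσ⟩ := hall (I τ) hIτ
    have hle := h.sup'_le_apply_add ha hS hσt ht
    have : (s : ℝ) ≤ σ := by exact_mod_cast hsσ
    rw [hσ] at hle
    nlinarith [Finset.le_sup' (U 0) hIτ]
  simpa using Finset.card_nsmul_le_sum _ _ _ hterm

theorem shift (h : IsBestReplySeq B S U I J N) {s L : ℕ} (hsL : s + L ≤ N) :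
    IsBestReplySeq B S (fun τ => U (s + τ)) (fun τ => I (s + τ)) (fun τ => J (s + τ)) L where
  mem τ hτ := h.mem (s + τ) (by omega)
  le_apply τ hτ := h.le_apply (s + τ) (by omega)
  succ τ hτ := h.succ (s + τ) (by omega)

theorem restrict (h : IsBestReplySeq B S U I J N) (hS' : S' ⊆ S) (hI : ∀ t < N, I t ∈ S') :
    IsBestReplySeq B S' U I J N where
  mem := hI
  le_apply t ht i hi := h.le_apply t ht i (hS' hi)
  succ := h.succ

end IsBestReplySeq

/-- Robinson's vector systems, with `W` the negative of his column vector `V`, so that both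
players maximize and the definition is symmetric under `A ↦ -Aᵀ`. -/
def IsVectorSystem (A : Matrix ι κ ℝ) (S : Finset ι) (T : Finset κ) (U : ℕ → ι → ℝ)
    (W : ℕ → κ → ℝ) (I : ℕ → ι) (J : ℕ → κ) (N : ℕ) : Prop :=
  IsBestReplySeq A S U I J N ∧ IsBestReplySeq (-Aᵀ) T W J I N

def GapBound (A : Matrix ι κ ℝ) (S : Finset ι) (T : Finset κ) (b : ℕ → ℝ) : Prop :=
  ∀ (hS : S.Nonempty) (hT : T.Nonempty) (U : ℕ → ι → ℝ) (W : ℕ → κ → ℝ) (I : ℕ → ι)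
    (J : ℕ → κ) (N : ℕ), IsVectorSystem A S T U W I J N → ∀ t ≤ N,
      S.sup' hS (U t) + T.sup' hT (W t) ≤ S.sup' hS (U 0) + T.sup' hT (W 0) + b t

variable {A : Matrix ι κ ℝ} {S : Finset ι} {T : Finset κ} {U : ℕ → ι → ℝ} {W : ℕ → κ → ℝ}
  {I : ℕ → ι} {J : ℕ → κ} {N : ℕ} {a : ℝ}

theorem isVectorSystem_neg_transpose_iff :
    IsVectorSystem (-Aᵀ) T S W U J I N ↔ IsVectorSystem A S T U W I J N := by
  rw [IsVectorSystem, IsVectorSystem, Matrix.transpose_neg, Matrix.transpose_transpose, neg_neg,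
    and_comm]

theorem gapBound_neg_transpose_iff {b : ℕ → ℝ} : GapBound (-Aᵀ) T S b ↔ GapBound A S T b := by
  constructor <;> intro hb hS hT U W I J N h t ht
  · linarith [hb hT hS W U J I N (isVectorSystem_neg_transpose_iff.2 h) t ht]
  · linarith [hb hT hS W U J I N (isVectorSystem_neg_transpose_iff.1 h) t ht]

theorem abs_neg_transpose_apply_le (ha : ∀ i j, |A i j| ≤ a) (j : κ) (i : ι) :
    |(-Aᵀ) j i| ≤ a := by
  simpa using ha i j

namespace IsVectorSystem

theorem sum_add_sum_eq_zero (h : IsVectorSystem A S T U W I J N) {t : ℕ} (ht : t ≤ N) :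
    ∑ τ ∈ Finset.range t, (U t (I τ) - U 0 (I τ)) +
      ∑ τ ∈ Finset.range t, (W t (J τ) - W 0 (J τ)) = 0 := by
  simp only [h.1.sub_eq_sum ht, h.2.sub_eq_sum ht, Matrix.neg_apply, Matrix.transpose_apply,
    Finset.sum_neg_distrib]
  rw [Finset.sum_comm (f := fun τ σ => A (I σ) (J τ))]
  ring

/-- Robinson's Lemma 2. Every entry `U t (I τ)` is within `2a(t - s)` of `S.sup' (U t)`, and the
increments of `U` and `W` summed along the choices made before `t` cancel. -/
theorem gap_le_of_forall_chosen (h : IsVectorSystem A S T U W I J N)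
    (ha : ∀ i j, |A i j| ≤ a) (ha0 : 0 ≤ a) (hS : S.Nonempty) (hT : T.Nonempty) {s t : ℕ}
    (ht : t ≤ N) (hrows : ∀ i ∈ S, ∃ τ, s ≤ τ ∧ τ < t ∧ I τ = i)
    (hcols : ∀ j ∈ T, ∃ τ, s ≤ τ ∧ τ < t ∧ J τ = j) :
    S.sup' hS (U t) + T.sup' hT (W t) ≤ S.sup' hS (U 0) + T.sup' hT (W 0) + 4 * a * (t - s) := by
  have hU := h.1.mul_sub_le_sum ha ha0 hS ht hrows
  have hW := h.2.mul_sub_le_sum (abs_neg_transpose_apply_le ha) ha0 hT ht hcols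
  have ht0 : (0 : ℝ) < t := by
    obtain ⟨i, hi⟩ := hS
    obtain ⟨τ, -, hτ, -⟩ := hrows i hi
    exact_mod_cast hτ.trans_le' (Nat.zero_le τ)
  have := h.sum_add_sum_eq_zero ht
  nlinarith

theorem gap_le_of_row_not_chosen [DecidableEq ι] (h : IsVectorSystem A S T U W I J N)
    (ha : ∀ i j, |A i j| ≤ a) (hS : S.Nonempty) (hT : T.Nonempty) {s L : ℕ} (hL : 0 < L)
    (hsL : s + L ≤ N) {i₀ : ι} (hi₀ : ∀ τ, s ≤ τ → τ < s + L → I τ ≠ i₀) {b : ℕ → ℝ}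
    (hsub : GapBound A (S.erase i₀) T b) :
    S.sup' hS (U (s + L)) + T.sup' hT (W (s + L)) ≤
      S.sup' hS (U s) + T.sup' hT (W s) + b L + 2 * a := by
  have hmem : ∀ τ < L, I (s + τ) ∈ S.erase i₀ := fun τ hτ =>
    Finset.mem_erase.2 ⟨hi₀ _ (by omega) (by omega), h.1.mem _ (by omega)⟩
  have hS' : (S.erase i₀).Nonempty := ⟨_, hmem 0 hL⟩
  have hwindow := hsub hS' hT _ _ _ _ L
    ⟨(h.1.shift hsL).restrict (S.erase_subset i₀) hmem, h.2.shift hsL⟩ L le_rfl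
  simp only [add_zero] at hwindow
  have hlast := h.1.sup'_le_apply_add ha hS (τ := s + (L - 1)) (by omega) hsL
  have hcast : ((s + L : ℕ) : ℝ) - ((s + (L - 1) : ℕ) : ℝ) = 1 := by
    rw [sub_eq_iff_eq_add']; norm_cast; omega
  rw [hcast] at hlast
  linarith [Finset.le_sup' (U (s + L)) (hmem (L - 1) (by omega)),
    Finset.sup'_mono (U s) (S.erase_subset i₀) hS']

theorem gap_le_of_col_not_chosen [DecidableEq κ] (h : IsVectorSystem A S T U W I J N)
    (ha : ∀ i j, |A i j| ≤ a) (hS : S.Nonempty) (hT : T.Nonempty) {s L : ℕ} (hL : 0 < L)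
    (hsL : s + L ≤ N) {j₀ : κ} (hj₀ : ∀ τ, s ≤ τ → τ < s + L → J τ ≠ j₀) {b : ℕ → ℝ}
    (hsub : GapBound A S (T.erase j₀) b) :
    S.sup' hS (U (s + L)) + T.sup' hT (W (s + L)) ≤
      S.sup' hS (U s) + T.sup' hT (W s) + b L + 2 * a := by
  linarith [(isVectorSystem_neg_transpose_iff.2 h).gap_le_of_row_not_chosen
    (abs_neg_transpose_apply_le ha) hT hS hL hsL hj₀ (gapBound_neg_transpose_iff.2 hsub)]

theorem gap_le_or_gap_le [DecidableEq ι] [DecidableEq κ] (h : IsVectorSystem A S T U W I J N)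
    (ha : ∀ i j, |A i j| ≤ a) (ha0 : 0 ≤ a) (hS : S.Nonempty) (hT : T.Nonempty) {s L : ℕ}
    (hL : 0 < L) (hsL : s + L ≤ N) {b : ℕ → ℝ} (hrow : ∀ i₀ ∈ S, GapBound A (S.erase i₀) T b)
    (hcol : ∀ j₀ ∈ T, GapBound A S (T.erase j₀) b) :
    S.sup' hS (U (s + L)) + T.sup' hT (W (s + L)) ≤
        S.sup' hS (U 0) + T.sup' hT (W 0) + 4 * a * ((s + L : ℕ) - s) ∨
      S.sup' hS (U (s + L)) + T.sup' hT (W (s + L)) ≤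
        S.sup' hS (U s) + T.sup' hT (W s) + b L + 2 * a := by
  by_cases hall : (∀ i ∈ S, ∃ τ, s ≤ τ ∧ τ < s + L ∧ I τ = i) ∧
      ∀ j ∈ T, ∃ τ, s ≤ τ ∧ τ < s + L ∧ J τ = j
  · exact .inl (h.gap_le_of_forall_chosen ha ha0 hS hT hsL hall.1 hall.2)
  rw [not_and_or] at hall
  push Not at hall
  rcases hall with ⟨i₀, hi₀, hnot⟩ | ⟨j₀, hj₀, hnot⟩
  · exact .inr (h.gap_le_of_row_not_chosen ha hS hT hL hsL hnot (hrow i₀ hi₀))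
  · exact .inr (h.gap_le_of_col_not_chosen ha hS hT hL hsL hnot (hcol j₀ hj₀))

end IsVectorSystem

/-- Robinson's theorem. By induction on `#S + #T`: over a window of length `L`, either every row
and column is chosen (Lemma 2) or the system lives on a smaller block during the window. -/
theorem eventually_gapBound [Finite ι] [Finite κ] (A : Matrix ι κ ℝ) (S : Finset ι)
    (T : Finset κ) {ε : ℝ} (hε : 0 < ε) : ∀ᶠ C in atTop, GapBound A S T fun t => ε * t + C := by
  classical
  obtain ⟨a, ha0, ha⟩ : ∃ a, 0 ≤ a ∧ ∀ i j, |A i j| ≤ a := by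
    obtain ⟨a, ha⟩ := Finite.exists_le fun x : ι × κ => |A x.1 x.2|
    exact ⟨max a 0, le_max_right a 0, fun i j => (ha (i, j)).trans (le_max_left a 0)⟩
  induction hk : S.card + T.card using Nat.strong_induction_on generalizing S T ε with
  | _ k ih =>
  have hsub : ∀ᶠ C in atTop, (∀ i₀ ∈ S, GapBound A (S.erase i₀) T fun t => ε / 2 * t + C) ∧
      ∀ j₀ ∈ T, GapBound A S (T.erase j₀) fun t => ε / 2 * t + C := by
    refine ((Filter.eventually_all_finset S).2 fun i₀ hi₀ => ?_).and
      ((Filter.eventually_all_finset T).2 fun j₀ hj₀ => ?_)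
    · exact ih _ (hk ▸ by linarith [Finset.card_erase_lt_of_mem hi₀]) _ _ (half_pos hε) rfl
    · exact ih _ (hk ▸ by linarith [Finset.card_erase_lt_of_mem hj₀]) _ _ (half_pos hε) rfl
  obtain ⟨C', hrow, hcol⟩ := hsub.exists
  obtain ⟨L, hL⟩ := exists_nat_ge ((C' + 2 * a) / (ε / 2))
  have hbudget : ε / 2 * (L + 1 : ℕ) + C' + 2 * a ≤ ε * (L + 1 : ℕ) := by
    rw [div_le_iff₀ (half_pos hε)] at hL
    push_cast
    linarith
  filter_upwards [eventually_ge_atTop (4 * a * (L + 1 : ℕ))] with C hC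
  intro hS hT U W I J N h t ht
  have hgap := le_add_mul_add_of_window (g := fun t => S.sup' hS (U t) + T.sup' hT (W t))
    (N := N) (L := L + 1) (b := 4 * a * (L + 1 : ℕ)) (Nat.succ_pos L) hε.le ?_ ?_ t ht
  · linarith
  · intro t ht htL
    have htL' : (t : ℝ) ≤ (L + 1 : ℕ) := by exact_mod_cast htL
    have hU := h.1.sup'_le_sup'_add ha hS (Nat.zero_le t) ht
    have hW := h.2.sup'_le_sup'_add (abs_neg_transpose_apply_le ha) hT (Nat.zero_le t) ht
    push_cast at hU hW htL' ⊢
    nlinarith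
  · intro s hsL
    rcases h.gap_le_or_gap_le ha ha0 hS hT (Nat.succ_pos L) hsL hrow hcol with hle | hle
    · left
      push_cast at hle ⊢
      linarith
    · right
      linarith

end Robinson

section Simplex

variable {ι : Type*} [Fintype ι] {p : ι → ℝ}

theorem nonempty_of_mem_stdSimplex (hp : p ∈ stdSimplex ℝ ι) : Nonempty ι := by
  by_contra h
  rw [not_nonempty_iff] at h
  simpa using hp.2

theorem dotProduct_le_sup' [Nonempty ι] (hp : p ∈ stdSimplex ℝ ι) (v : ι → ℝ) :
    p ⬝ᵥ v ≤ Finset.univ.sup' Finset.univ_nonempty v :=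
  calc p ⬝ᵥ v ≤ ∑ i, p i * Finset.univ.sup' Finset.univ_nonempty v :=
        Finset.sum_le_sum fun i _ =>
          mul_le_mul_of_nonneg_left (Finset.le_sup' v (Finset.mem_univ i)) (hp.1 i)
    _ = Finset.univ.sup' Finset.univ_nonempty v := by rw [← Finset.sum_mul, hp.2, one_mul]

theorem dotProduct_eq_mul_add {u v : ι → ℝ} {α c : ℝ} (hv : ∀ i, v i = α * u i + c)
    (hp : p ∈ stdSimplex ℝ ι) : p ⬝ᵥ v = α * (p ⬝ᵥ u) + c := by
  simp only [dotProduct, hv, mul_add, Finset.sum_add_distrib, ← Finset.sum_mul, hp.2, one_mul,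
    Finset.mul_sum]
  congr 1
  exact Finset.sum_congr rfl fun i _ => by ring

end Simplex

theorem tendsto_infDist_of_tendsto {X α : Type*} [PseudoMetricSpace X] {K Z : Set X}
    (hK : IsCompact K) {f : X → ℝ} (hf : ContinuousOn f K) (hZ : ∀ x ∈ K, f x ≤ 0 → x ∈ Z)
    {l : Filter α} {x : α → X} (hxK : ∀ a, x a ∈ K) (hfx : Tendsto (f ∘ x) l (nhds 0)) :
    Tendsto (fun a => Metric.infDist (x a) Z) l (nhds 0) := by
  refine tendsto_order.2
    ⟨fun b hb => Eventually.of_forall fun a => hb.trans_le Metric.infDist_nonneg, fun ε hε => ?_⟩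
  have hpos : ∀ z ∈ K ∩ {z | ε ≤ Metric.infDist z Z}, 0 < f z := by
    intro z hz
    by_contra! hfz
    have := Metric.infDist_zero_of_mem (hZ z hz.1 hfz)
    linarith [hz.2.out]
  obtain ⟨δ, hδ, hδf⟩ :=
    (hK.inter_right (isClosed_le continuous_const (Metric.continuous_infDist_pt Z))
      ).exists_forall_le' (hf.mono Set.inter_subset_left) hpos
  filter_upwards [(tendsto_order.1 hfx).2 δ hδ] with a ha
  by_contra! hge
  exact (hδf (x a) ⟨hxK a, hge⟩).not_gt ha

section NashGap

variable {m n : ℕ} [Nonempty (Fin m)] [Nonempty (Fin n)]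

/-- The Nikaido–Isoda function: the sum of the two players' regrets. -/
noncomputable def nashGap (G : Game m n) (p : Fin m → ℝ) (q : Fin n → ℝ) : ℝ :=
  (Finset.univ.sup' Finset.univ_nonempty (G.1 *ᵥ q) - p ⬝ᵥ G.1 *ᵥ q) +
    (Finset.univ.sup' Finset.univ_nonempty (p ᵥ* G.2) - p ⬝ᵥ G.2 *ᵥ q)

variable {G : Game m n} {p : Fin m → ℝ} {q : Fin n → ℝ}

theorem nashGap_nonneg (hp : p ∈ stdSimplex ℝ (Fin m)) (hq : q ∈ stdSimplex ℝ (Fin n)) :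
    0 ≤ nashGap G p q := by
  have h1 := dotProduct_le_sup' hp (G.1 *ᵥ q)
  have h2 := dotProduct_le_sup' hq (p ᵥ* G.2)
  rw [dotProduct_comm, ← dotProduct_mulVec] at h2
  unfold nashGap
  linarith

theorem isNash_of_nashGap_nonpos (hp : p ∈ stdSimplex ℝ (Fin m))
    (hq : q ∈ stdSimplex ℝ (Fin n)) (h : nashGap G p q ≤ 0) : IsNash G p q := by
  have h1 := dotProduct_le_sup' hp (G.1 *ᵥ q)
  have h2 := dotProduct_le_sup' hq (p ᵥ* G.2)
  rw [dotProduct_comm, ← dotProduct_mulVec] at h2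
  unfold nashGap at h
  refine ⟨hp, hq, fun p' hp' => ?_, fun q' hq' => ?_⟩
  · linarith [dotProduct_le_sup' hp' (G.1 *ᵥ q)]
  · have h3 := dotProduct_le_sup' hq' (p ᵥ* G.2)
    rw [dotProduct_comm, ← dotProduct_mulVec] at h3
    linarith

theorem continuous_nashGap : Continuous fun z : (Fin m → ℝ) × (Fin n → ℝ) => nashGap G z.1 z.2 := by
  unfold nashGap
  refine .add (.sub ?_ (by fun_prop)) (.sub ?_ (by fun_prop))
  · exact Continuous.finset_sup'_apply _ fun i _ => by fun_prop
  · exact Continuous.finset_sup'_apply _ fun j _ => by fun_prop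

end NashGap

theorem smul_eq_add_of_eq_average {E : Type*} [AddCommGroup E] [Module ℝ E] {t : ℕ} {x y e : E}
    (h : y = ((t : ℝ) / (t + 1)) • x + ((1 : ℝ) / (t + 1)) • e) :
    ((t + 1 : ℕ) : ℝ) • y = (t : ℝ) • x + e := by
  have ht : (t : ℝ) + 1 ≠ 0 := by positivity
  rw [h, smul_add, smul_smul, smul_smul, Nat.cast_succ, mul_div_cancel₀ _ ht,
    mul_one_div_cancel ht, one_smul]

namespace ZeroSum

variable {m n : ℕ} {Z : Game m n} {p : ℕ → Fin m → ℝ} {q : ℕ → Fin n → ℝ}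

theorem exists_isVectorSystem (hZ : ZeroSum Z) (h : IsDFP Z p q) :
    ∃ (I : ℕ → Fin m) (J : ℕ → Fin n), ∀ N, Robinson.IsVectorSystem Z.1 Finset.univ Finset.univ
      (fun t => (t : ℝ) • (Z.1 *ᵥ q t)) (fun t => (t : ℝ) • (p t ᵥ* Z.2)) I J N := by
  obtain ⟨-, hstep⟩ := h
  choose I J hI hJ hp hq using hstep
  have hZ2 : Z.2 = -Z.1 := eq_neg_of_add_eq_zero_right hZ
  refine ⟨I, J, fun N => ⟨⟨fun _ _ => Finset.mem_univ _, fun t _ i _ => ?_, fun t _ i => ?_⟩,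
    ⟨fun _ _ => Finset.mem_univ _, fun t _ j _ => ?_, fun t _ j => ?_⟩⟩⟩
  · exact mul_le_mul_of_nonneg_left (hI t i) t.cast_nonneg
  · have := congrFun (congrArg (Z.1 *ᵥ ·) (smul_eq_add_of_eq_average (hq t))) i
    simpa [mulVec_smul, mulVec_add] using this
  · exact mul_le_mul_of_nonneg_left (hJ t j) t.cast_nonneg
  · have := congrFun (congrArg (· ᵥ* Z.2) (smul_eq_add_of_eq_average (hp t))) j
    simpa [smul_vecMul, add_vecMul, hZ2] using this

theorem nashGap_eq (hZ : ZeroSum Z) [Nonempty (Fin m)] [Nonempty (Fin n)] (p : Fin m → ℝ)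
    (q : Fin n → ℝ) : nashGap Z p q =
      Finset.univ.sup' Finset.univ_nonempty (Z.1 *ᵥ q) +
        Finset.univ.sup' Finset.univ_nonempty (p ᵥ* Z.2) := by
  have : p ⬝ᵥ Z.1 *ᵥ q + p ⬝ᵥ Z.2 *ᵥ q = 0 := by
    rw [← dotProduct_add, ← add_mulVec, hZ, zero_mulVec, dotProduct_zero]
  unfold nashGap
  linarith

theorem tendsto_nashGap (hZ : ZeroSum Z) (h : IsDFP Z p q) [Nonempty (Fin m)]
    [Nonempty (Fin n)] : Tendsto (fun t => nashGap Z (p t) (q t)) atTop (nhds 0) := by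
  obtain ⟨I, J, hsys⟩ := hZ.exists_isVectorSystem h
  have hgap : ∀ t : ℕ, Finset.univ.sup' Finset.univ_nonempty ((t : ℝ) • (Z.1 *ᵥ q t)) +
      Finset.univ.sup' Finset.univ_nonempty ((t : ℝ) • (p t ᵥ* Z.2)) =
        t * nashGap Z (p t) (q t) := fun t => by
    rw [hZ.nashGap_eq, mul_add, Finset.mul₀_sup' t.cast_nonneg, Finset.mul₀_sup' t.cast_nonneg]
    rfl
  refine tendsto_order.2 ⟨fun b hb => Eventually.of_forall fun t =>
    hb.trans_le (nashGap_nonneg (h.1 t).1 (h.1 t).2), fun ε hε => ?_⟩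
  obtain ⟨C, hC⟩ := (Robinson.eventually_gapBound Z.1 Finset.univ Finset.univ (half_pos hε)).exists
  filter_upwards [eventually_gt_atTop 0,
    tendsto_natCast_atTop_atTop.eventually_gt_atTop (2 * C / ε)] with t ht hCt
  have hbound := hC Finset.univ_nonempty Finset.univ_nonempty _ _ I J t (hsys t) t le_rfl
  rw [hgap, hgap] at hbound
  rw [div_lt_iff₀ hε] at hCt
  have ht' : (0 : ℝ) < t := by exact_mod_cast ht
  push_cast at hbound
  nlinarith

theorem hasFPP (hZ : ZeroSum Z) : HasFPP Z := by
  intro p q h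
  have := nonempty_of_mem_stdSimplex (h.1 0).1
  have := nonempty_of_mem_stdSimplex (h.1 0).2
  exact tendsto_infDist_of_tendsto
    ((isCompact_stdSimplex ℝ _).prod (isCompact_stdSimplex ℝ _)) continuous_nashGap.continuousOn
    (fun z hz hz0 => isNash_of_nashGap_nonpos hz.1 hz.2 hz0) h.1 (hZ.tendsto_nashGap h)

end ZeroSum

namespace StratEquiv

variable {m n : ℕ} {G G' : Game m n}

theorem exists_affine (h : StratEquiv G G') : ∃ α β : ℝ, 0 < α ∧ 0 < β ∧
    (∀ q, ∃ c, ∀ i, (G'.1 *ᵥ q) i = α * (G.1 *ᵥ q) i + c) ∧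
    ∀ p, ∃ c, ∀ j, (p ᵥ* G'.2) j = β * (p ᵥ* G.2) j + c := by
  obtain ⟨α, β, hα, hβ, E, ⟨x, y, hx, hy⟩, h1, h2⟩ := h
  refine ⟨α, β, hα, hβ, fun q => ⟨x ⬝ᵥ q, fun i => ?_⟩, fun p => ⟨y ⬝ᵥ p, fun j => ?_⟩⟩
  · simp only [h1, mulVec, dotProduct, Matrix.add_apply, Matrix.smul_apply, smul_eq_mul, hx,
      Finset.mul_sum, ← Finset.sum_add_distrib]
    exact Finset.sum_congr rfl fun j _ => by ring
  · simp only [h2, vecMul, dotProduct, Matrix.add_apply, Matrix.smul_apply, smul_eq_mul, hy,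
      Finset.mul_sum, ← Finset.sum_add_distrib]
    exact Finset.sum_congr rfl fun i _ => by ring

theorem isDFP {p : ℕ → Fin m → ℝ} {q : ℕ → Fin n → ℝ} (h : StratEquiv G G') (hG : IsDFP G p q) :
    IsDFP G' p q := by
  obtain ⟨α, β, hα, hβ, h1, h2⟩ := h.exists_affine
  refine ⟨hG.1, fun t => ?_⟩
  obtain ⟨i, j, hi, hj, hp, hq⟩ := hG.2 t
  obtain ⟨c, hc⟩ := h1 (q t)
  obtain ⟨d, hd⟩ := h2 (p t)
  refine ⟨i, j, fun i' => ?_, fun j' => ?_, hp, hq⟩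
  · rw [hc, hc]
    gcongr
    exact hi i'
  · rw [hd, hd]
    gcongr
    exact hj j'

theorem isNash_iff {p : Fin m → ℝ} {q : Fin n → ℝ} (h : StratEquiv G G') :
    IsNash G' p q ↔ IsNash G p q := by
  obtain ⟨α, β, hα, hβ, h1, h2⟩ := h.exists_affine
  obtain ⟨c, hc⟩ := h1 q
  obtain ⟨d, hd⟩ := h2 p
  have hpay1 : ∀ p' ∈ stdSimplex ℝ (Fin m), p' ⬝ᵥ G'.1 *ᵥ q = α * (p' ⬝ᵥ G.1 *ᵥ q) + c :=
    fun p' hp' => dotProduct_eq_mul_add hc hp'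
  have hpay2 : ∀ q' ∈ stdSimplex ℝ (Fin n), p ⬝ᵥ G'.2 *ᵥ q' = β * (p ⬝ᵥ G.2 *ᵥ q') + d := by
    intro q' hq'
    simp only [dotProduct_mulVec, dotProduct_comm _ q']
    exact dotProduct_eq_mul_add hd hq'
  refine and_congr_right fun hp => and_congr_right fun hq =>
    and_congr (forall₂_congr fun p' hp' => ?_) (forall₂_congr fun q' hq' => ?_)
  · rw [hpay1 p' hp', hpay1 p hp, add_le_add_iff_right, mul_le_mul_iff_of_pos_left hα]
  · rw [hpay2 q' hq', hpay2 q hq, add_le_add_iff_right, mul_le_mul_iff_of_pos_left hβ]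

theorem hasFPP (h : StratEquiv G G') (hG' : HasFPP G') : HasFPP G := by
  intro p q hpq
  simpa only [h.isNash_iff] using hG' p q (h.isDFP hpq)

end StratEquiv

theorem StratEquivZeroSum.hasFPP {m n : ℕ} {G : Game m n} (h : StratEquivZeroSum G) : HasFPP G :=
  let ⟨_, hZ, hGZ⟩ := h
  hGZ.hasFPP hZ.hasFPP

theorem stratEquivZeroSum_add_of_normHarmonic {m n : ℕ} (hm : 1 ≤ m) (hn : 1 ≤ n)
    {H E : Game m n} (hH : NormHarmonic m n H) (hE : NonStrategic E) :
    StratEquivZeroSum (H + E) := by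
  obtain ⟨x, y, hx, hy⟩ := hE
  refine ⟨((m : ℝ) • H.1, (n : ℝ) • H.2), hH.2, m, n, by positivity, by positivity,
    (-((m : ℝ) • E.1), -((n : ℝ) • E.2)), ⟨fun j => -(m * x j), fun i => -(n * y i), ?_, ?_⟩,
    ?_, ?_⟩ <;> simp [hx, hy]

theorem stmt12 {m n : ℕ} (hm : 1 ≤ m) (hn : 1 ≤ n) (H E : Game m n)
    (hH : NormHarmonic m n H) (hE : NonStrategic E) :
    HasFPP (H + E) :=
  (stratEquivZeroSum_add_of_normHarmonic hm hn hH hE).hasFPP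
end

section
/- Every normalized harmonic m×n bimatrix game H can be written in exactly one way as H = I + Z, where I is a normalized identical interest game and Z is a normalized zero-sum game; in particular, the zero-sum equivalent potential component of H in the strategic decomposition (𝓘∩𝓝) ⊕ (𝓩∩𝓝) ⊕ 𝓑 is zero. -/
open Matrix Filter

/-!
The hypotheses `m A + n B = 0`, `m, n > 0` and normalization force every row and every column
of both payoff matrices of `H` to sum to zero. This property passes to `(A + B) / 2` and
`(A - B) / 2`, which gives the decomposition; its uniqueness holds for every game, because the
swap `(A, B) ↦ (B, A)` fixes identical interest games and negates zero-sum games.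

If `B = (P, Q)` lies in `𝓑`, then `P - Q` (from `𝓘 + 𝓔`) and `P + Q` (from `𝓩 + 𝓔`) have the
form `f i + g j`, hence so do `P` and `Q`. A matrix of this form whose rows and columns all sum
to zero is orthogonal to itself, hence zero; and `B = H - I - Z` has this property.
-/

theorem Submodule.mem_of_smul_add_smul_eq_zero {K V : Type*} [Field K] [AddCommGroup V]
    [Module K V] (p : Submodule K V) {a b : K} {x y : V} (ha : a ≠ 0) (h : a • x + b • y = 0)
    (hy : y ∈ p) : x ∈ p := by
  rw [← inv_smul_smul₀ ha x, eq_neg_of_add_eq_zero_left h]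
  exact p.smul_mem _ (p.neg_mem (p.smul_mem _ hy))

namespace Matrix

section

variable (R ι κ : Type*) [Semiring R] [Fintype ι] [Fintype κ]

def rowSumsZero : Submodule R (Matrix ι κ R) where
  carrier := {M | ∀ i, ∑ j, M i j = 0}
  add_mem' {M N} hM hN i := by simp [Finset.sum_add_distrib, hM i, hN i]
  zero_mem' i := by simp
  smul_mem' c M hM i := by simp [← Finset.mul_sum, hM i]

def colSumsZero : Submodule R (Matrix ι κ R) where
  carrier := {M | ∀ j, ∑ i, M i j = 0}
  add_mem' {M N} hM hN j := by simp [Finset.sum_add_distrib, hM j, hN j]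
  zero_mem' j := by simp
  smul_mem' c M hM j := by simp [← Finset.mul_sum, hM j]

def doublyNormalized : Submodule R (Matrix ι κ R) := rowSumsZero R ι κ ⊓ colSumsZero R ι κ

def additiveSeparable : Submodule R (Matrix ι κ R) where
  carrier := {M | ∃ (f : ι → R) (g : κ → R), ∀ i j, M i j = f i + g j}
  add_mem' := by
    rintro M N ⟨f, g, hM⟩ ⟨f', g', hN⟩
    exact ⟨f + f', g + g', fun i j => by simp only [add_apply, hM, hN, Pi.add_apply]; abel⟩
  zero_mem' := ⟨0, 0, fun i j => by simp⟩
  smul_mem' := by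
    rintro c M ⟨f, g, hM⟩
    exact ⟨c • f, c • g, fun i j => by simp [hM, mul_add]⟩

end

theorem eq_zero_of_mem_additiveSeparable_of_mem_doublyNormalized {R ι κ : Type*} [CommRing R]
    [LinearOrder R] [IsStrictOrderedRing R] [Fintype ι] [Fintype κ] {M : Matrix ι κ R}
    (hsep : M ∈ additiveSeparable R ι κ) (hnorm : M ∈ doublyNormalized R ι κ) : M = 0 := by
  obtain ⟨f, g, hfg⟩ := hsep
  obtain ⟨hrow, hcol⟩ := hnorm
  -- Pairing `M` with `f i + g j` only sees its row and column sums.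
  have hself : ∑ i, ∑ j, M i j ^ 2 = 0 := calc
    ∑ i, ∑ j, M i j ^ 2 = ∑ i, ∑ j, (f i * M i j + g j * M i j) := by
      refine Finset.sum_congr rfl fun i _ => Finset.sum_congr rfl fun j _ => ?_
      rw [sq]
      nth_rewrite 2 [hfg]
      ring
    _ = ∑ i, f i * ∑ j, M i j + ∑ j, g j * ∑ i, M i j := by
      simp only [Finset.sum_add_distrib, Finset.mul_sum]
      rw [Finset.sum_comm (f := fun i j => g j * M i j)]
    _ = 0 := by simp [hrow _, hcol _]
  ext i j
  have hrow_sq := (Finset.sum_eq_zero_iff_of_nonneg fun i _ => by positivity).1 hself i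
    (Finset.mem_univ i)
  simpa using (Finset.sum_eq_zero_iff_of_nonneg fun j _ => by positivity).1 hrow_sq j
    (Finset.mem_univ j)

end Matrix

section

variable {m n : ℕ}

abbrev doublyNormalizedGames (m n : ℕ) : Submodule ℝ (Game m n) :=
  (doublyNormalized ℝ (Fin m) (Fin n)).prod (doublyNormalized ℝ (Fin m) (Fin n))

abbrev additiveSeparableGames (m n : ℕ) : Submodule ℝ (Game m n) :=
  (additiveSeparable ℝ (Fin m) (Fin n)).prod (additiveSeparable ℝ (Fin m) (Fin n))

theorem swap_mem_doublyNormalizedGames {G : Game m n} (hG : G ∈ doublyNormalizedGames m n) :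
    G.swap ∈ doublyNormalizedGames m n :=
  ⟨hG.2, hG.1⟩

theorem normalized_of_mem_doublyNormalizedGames {G : Game m n}
    (hG : G ∈ doublyNormalizedGames m n) : Normalized G :=
  ⟨hG.1.2, hG.2.1⟩

theorem NormHarmonic.mem_doublyNormalizedGames (hm : 0 < m) (hn : 0 < n) {H : Game m n}
    (hH : NormHarmonic m n H) : H ∈ doublyNormalizedGames m n := by
  obtain ⟨⟨hcol, hrow⟩, hharm⟩ := hH
  have hharm' : (n : ℝ) • H.2 + (m : ℝ) • H.1 = 0 := by rwa [add_comm]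
  exact ⟨⟨(rowSumsZero ℝ _ _).mem_of_smul_add_smul_eq_zero (by positivity) hharm hrow, hcol⟩,
    ⟨hrow, (colSumsZero ℝ _ _).mem_of_smul_add_smul_eq_zero (by positivity) hharm' hcol⟩⟩

theorem IdInterest.swap_eq {G : Game m n} (hG : IdInterest G) : G.swap = G :=
  Prod.ext hG.symm hG

theorem ZeroSum.swap_eq {G : Game m n} (hG : ZeroSum G) : G.swap = -G :=
  Prod.ext (eq_neg_of_add_eq_zero_right hG) (eq_neg_of_add_eq_zero_left hG)

theorem IdInterest.mem_doublyNormalizedGames {G : Game m n} (hG : IdInterest G)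
    (hN : Normalized G) : G ∈ doublyNormalizedGames m n := by
  obtain ⟨A, B⟩ := G
  obtain rfl : A = B := hG
  exact ⟨⟨hN.2, hN.1⟩, ⟨hN.2, hN.1⟩⟩

theorem ZeroSum.mem_doublyNormalizedGames {G : Game m n} (hG : ZeroSum G)
    (hN : Normalized G) : G ∈ doublyNormalizedGames m n := by
  obtain ⟨A, B⟩ := G
  obtain rfl : B = -A := eq_neg_of_add_eq_zero_right hG
  have hA : A ∈ rowSumsZero ℝ _ _ := by simpa using (rowSumsZero ℝ _ _).neg_mem hN.2
  exact ⟨⟨hA, hN.1⟩, ⟨hN.2, (colSumsZero ℝ _ _).neg_mem hN.1⟩⟩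

theorem NonStrategic.mem_additiveSeparableGames {E : Game m n} (hE : NonStrategic E) :
    E ∈ additiveSeparableGames m n := by
  obtain ⟨x, y, hx, hy⟩ := hE
  exact ⟨⟨0, x, fun i j => by simp [hx]⟩, ⟨y, 0, fun i j => by simp [hy]⟩⟩

theorem IsPotentialGame.fst_sub_snd_mem_s13 {G : Game m n} (hG : IsPotentialGame G) :
    G.1 - G.2 ∈ additiveSeparable ℝ (Fin m) (Fin n) := by
  obtain ⟨I, E, hI, hE, rfl⟩ := hG
  have hdiff : (I + E).1 - (I + E).2 = E.1 - E.2 := by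
    rw [Prod.fst_add, Prod.snd_add, hI, add_sub_add_left_eq_sub]
  rw [hdiff]
  exact sub_mem hE.mem_additiveSeparableGames.1 hE.mem_additiveSeparableGames.2

theorem IsZeroSumEquivAdd.fst_add_snd_mem {G : Game m n} (hG : IsZeroSumEquivAdd G) :
    G.1 + G.2 ∈ additiveSeparable ℝ (Fin m) (Fin n) := by
  obtain ⟨Z, E, hZ, hE, rfl⟩ := hG
  have hsum : (Z + E).1 + (Z + E).2 = E.1 + E.2 := by
    rw [Prod.fst_add, Prod.snd_add, add_add_add_comm, show Z.1 + Z.2 = 0 from hZ, zero_add]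
  rw [hsum]
  exact add_mem hE.mem_additiveSeparableGames.1 hE.mem_additiveSeparableGames.2

theorem IsZSEP.mem_additiveSeparableGames {G : Game m n} (hG : IsZSEP G) :
    G ∈ additiveSeparableGames m n := by
  have hsum := hG.2.fst_add_snd_mem
  have hdiff := hG.1.fst_sub_snd_mem_s13
  refine Submodule.mem_prod.2 ⟨?_, ?_⟩
  · convert Submodule.smul_mem _ (1 / 2 : ℝ) (add_mem hsum hdiff) using 1
    module
  · convert Submodule.smul_mem _ (1 / 2 : ℝ) (sub_mem hsum hdiff) using 1
    module

noncomputable def idInterestPart (G : Game m n) : Game m n := (1 / 2 : ℝ) • (G + G.swap)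

noncomputable def zeroSumPart (G : Game m n) : Game m n := (1 / 2 : ℝ) • (G - G.swap)

theorem idInterest_idInterestPart (G : Game m n) : IdInterest (idInterestPart G) := by
  simp only [IdInterest, idInterestPart, Prod.smul_fst, Prod.smul_snd, Prod.fst_add,
    Prod.snd_add, Prod.fst_swap, Prod.snd_swap, add_comm]

theorem zeroSum_zeroSumPart (G : Game m n) : ZeroSum (zeroSumPart G) := by
  simp only [ZeroSum, zeroSumPart, Prod.smul_fst, Prod.smul_snd, Prod.fst_sub,
    Prod.snd_sub, Prod.fst_swap, Prod.snd_swap]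
  module

theorem idInterestPart_add_zeroSumPart (G : Game m n) :
    idInterestPart G + zeroSumPart G = G := by
  simp only [idInterestPart, zeroSumPart]
  module

theorem idInterestPart_mem {G : Game m n} (hG : G ∈ doublyNormalizedGames m n) :
    idInterestPart G ∈ doublyNormalizedGames m n :=
  Submodule.smul_mem _ _ (add_mem hG (swap_mem_doublyNormalizedGames hG))

theorem zeroSumPart_mem {G : Game m n} (hG : G ∈ doublyNormalizedGames m n) :
    zeroSumPart G ∈ doublyNormalizedGames m n :=
  Submodule.smul_mem _ _ (sub_mem hG (swap_mem_doublyNormalizedGames hG))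

theorem IdInterest.idInterestPart_add {I Z : Game m n} (hI : IdInterest I) (hZ : ZeroSum Z) :
    idInterestPart (I + Z) = I := by
  rw [idInterestPart, Prod.swap_add, hI.swap_eq, hZ.swap_eq]
  module

theorem ZeroSum.zeroSumPart_add {I Z : Game m n} (hI : IdInterest I) (hZ : ZeroSum Z) :
    zeroSumPart (I + Z) = Z := by
  rw [zeroSumPart, Prod.swap_add, hI.swap_eq, hZ.swap_eq]
  module

end

theorem stmt13 {m n : ℕ} (hm : 1 ≤ m) (hn : 1 ≤ n) (H : Game m n)
    (hH : NormHarmonic m n H) :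
    (∃! d : Game m n × Game m n,
      IdInterest d.1 ∧ Normalized d.1 ∧ ZeroSum d.2 ∧ Normalized d.2 ∧
      H = d.1 + d.2) ∧
    (∀ I Z B : Game m n, IdInterest I → Normalized I → ZeroSum Z → Normalized Z →
      IsZSEP B → H = I + Z + B → B = 0) := by
  have hH' := hH.mem_doublyNormalizedGames hm hn
  refine ⟨⟨(idInterestPart H, zeroSumPart H), ⟨idInterest_idInterestPart H,
    normalized_of_mem_doublyNormalizedGames (idInterestPart_mem hH'), zeroSum_zeroSumPart H,
    normalized_of_mem_doublyNormalizedGames (zeroSumPart_mem hH'),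
    (idInterestPart_add_zeroSumPart H).symm⟩, ?_⟩, ?_⟩
  · rintro ⟨I, Z⟩ ⟨hI, -, hZ, -, rfl⟩
    exact Prod.ext (hI.idInterestPart_add hZ).symm (hZ.zeroSumPart_add hI).symm
  · intro I Z B hI hNI hZ hNZ hB hsum
    have hBnorm : B ∈ doublyNormalizedGames m n := by
      rw [eq_sub_of_add_eq' hsum.symm]
      exact sub_mem hH' (add_mem (hI.mem_doublyNormalizedGames hNI)
        (hZ.mem_doublyNormalizedGames hNZ))
    have hBsep := hB.mem_additiveSeparableGames
    exact Prod.ext (eq_zero_of_mem_additiveSeparable_of_mem_doublyNormalized hBsep.1 hBnorm.1)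
      (eq_zero_of_mem_additiveSeparable_of_mem_doublyNormalized hBsep.2 hBnorm.2)
end

section
/- An m×n bimatrix game (A,B) admits a potential function, i.e. a matrix Φ ∈ ℝ^{m×n} with Φ_{ij} − Φ_{i'j} = A_{ij} − A_{i'j} for all i,i' ∈ [m], j ∈ [n] and Φ_{ij} − Φ_{ij'} = B_{ij} − B_{ij'} for all i ∈ [m], j,j' ∈ [n], if and only if (A,B) is the sum of an identical interest game and a non-strategic game, i.e. (A,B) ∈ 𝓘 + 𝓔. -/
open Matrix Filter

/-!
A potential `Φ` for `(A, B)` is exactly a matrix such that `A - Φ` is constant down each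
column and `B - Φ` is constant along each row; the constants are the payoffs of a
non-strategic game `E`, and `(A, B) = (Φ, Φ) + E`.
-/

theorem exists_add_const_iff_sub_eq {ι κ α : Type*} [AddCommGroup α] (A Φ : ι → κ → α) :
    (∃ x : κ → α, ∀ i j, A i j = Φ i j + x j) ↔
      ∀ i i' j, Φ i j - Φ i' j = A i j - A i' j := by
  constructor
  · rintro ⟨x, hx⟩ i i' j
    rw [hx i j, hx i' j]
    abel
  · intro h
    rcases isEmpty_or_nonempty ι with _ | ⟨⟨i₀⟩⟩
    · exact ⟨0, isEmptyElim⟩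
    · refine ⟨fun j => A i₀ j - Φ i₀ j, fun i j => ?_⟩
      rw [← sub_eq_iff_eq_add', ← sub_eq_sub_iff_sub_eq_sub, h i i₀ j]

theorem isPotentialGame_iff_s17 {m n : ℕ} (G : Game m n) :
    IsPotentialGame G ↔ ∃ Φ : Matrix (Fin m) (Fin n) ℝ,
      (∃ x : Fin n → ℝ, ∀ i j, G.1 i j = Φ i j + x j) ∧
      (∃ y : Fin m → ℝ, ∀ i j, G.2 i j = Φ i j + y i) := by
  constructor
  · rintro ⟨⟨Φ, _⟩, E, (rfl : Φ = _), ⟨x, y, hx, hy⟩, rfl⟩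
    exact ⟨Φ, ⟨x, fun i j => by simp [hx]⟩, ⟨y, fun i j => by simp [hy]⟩⟩
  · rintro ⟨Φ, ⟨x, hx⟩, ⟨y, hy⟩⟩
    refine ⟨(Φ, Φ), (of fun _ j => x j, of fun i _ => y i), rfl,
      ⟨x, y, fun _ _ => rfl, fun _ _ => rfl⟩, ?_⟩
    ext i j <;> simp [hx, hy]

theorem stmt17_general {m n : ℕ} (G : Game m n) :
    (∃ Φ : Matrix (Fin m) (Fin n) ℝ,
      (∀ (i i' : Fin m) (j : Fin n), Φ i j - Φ i' j = G.1 i j - G.1 i' j) ∧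
      (∀ (i : Fin m) (j j' : Fin n), Φ i j - Φ i j' = G.2 i j - G.2 i j')) ↔
    IsPotentialGame G := by
  rw [isPotentialGame_iff_s17]
  refine exists_congr fun Φ => and_congr ?_ ?_
  · exact (exists_add_const_iff_sub_eq G.1 Φ).symm
  · rw [forall_comm, forall_congr' fun _ => forall_comm, exists_congr fun _ => forall_comm]
    exact (exists_add_const_iff_sub_eq G.2ᵀ Φᵀ).symm

theorem stmt17 {m n : ℕ} (hm : 1 ≤ m) (hn : 1 ≤ n) (G : Game m n) :
    (∃ Φ : Matrix (Fin m) (Fin n) ℝ,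
      (∀ (i i' : Fin m) (j : Fin n), Φ i j - Φ i' j = G.1 i j - G.1 i' j) ∧
      (∀ (i : Fin m) (j j' : Fin n), Φ i j - Φ i j' = G.2 i j - G.2 i j')) ↔
    IsPotentialGame G :=
  stmt17_general G
end
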